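/- arXiv:1304.1990 — 3 statements merged into one kernel-verified Lean document; each statement's English description precedes it below -/
import Mathlib

section
/- For every integer k with 2 ≤ k ≤ d−1 there is a constant c > 0 depending only on d such that if the characteristic of F_q exceeds c, then the set H̄_k contains d linearly independent vectors of F̄_q^d (it spans F̄_q^d); in particular, H̄_k is not contained in any hyperplane of affine d-space over F̄_q. -/
open MvPolynomial

noncomputable section

/-- The homogeneous polynomial `h_{j+1}(x) = x_1^{j+2} + ⋯ + x_k^{j+2} − x_{k+j+1}^{j+2}`
(in 0-based indexing, `j : Fin (d-k)` corresponds to the defining equation `h_{j+1}`). -/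
def hpoly (K : Type) [CommRing K] (d k : ℕ) (j : Fin (d - k)) : MvPolynomial (Fin d) K :=
  (∑ i : Fin d, if (i : ℕ) < k then X i ^ ((j : ℕ) + 2) else 0)
    - X (⟨k + (j : ℕ), by have h := j.isLt; omega⟩ : Fin d) ^ ((j : ℕ) + 2)

/-- The homogeneous variety `H̄_k` as a set of points with coordinates in `K`. -/
def Hset (K : Type) [CommRing K] (d k : ℕ) : Set (Fin d → K) :=
  {x | ∀ j : Fin (d - k), eval x (hpoly K d k j) = 0}

open scoped Classical in
/-- The set of `F_q`-points of the homogeneous variety `H_k`, as a finite set. -/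
def Hfin (F : Type) [Field F] [Fintype F] (d k : ℕ) : Finset (Fin d → F) :=
  Finset.univ.filter fun x => ∀ j : Fin (d - k), eval x (hpoly F d k j) = 0

open scoped ENNReal in
/-- `L^p` norm with respect to the normalized counting measure on `F_q^d`. -/
def lpNorm {F : Type} [Fintype F] {d : ℕ} (p : ℝ≥0∞) (f : (Fin d → F) → ℂ) : ℝ :=
  if p = ⊤ then ⨆ x, ‖f x‖
  else (((Fintype.card F : ℝ) ^ d)⁻¹ * ∑ x, ‖f x‖ ^ p.toReal) ^ (1 / p.toReal)

/-- Convolution `f ∗ dσ` with the normalized surface measure on `V`. -/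
def convMeas {F : Type} [Field F] [Fintype F] {d : ℕ} (V : Finset (Fin d → F))
    (f : (Fin d → F) → ℂ) : (Fin d → F) → ℂ :=
  fun y => (V.card : ℂ)⁻¹ * ∑ x ∈ V, f (y - x)

end

/-!
The variety `H̄_k` is stable under `x_{k+j} ↦ ζ x_{k+j}` for every `(j+2)`-th root of unity `ζ`.
The point `u_m = e_m + (e_k + ⋯ + e_{d-1})`, `m < k`, lies on `H̄_k`; rescaling its coordinate
`k + j` by a root of unity `ζ ≠ 1`, which exists as soon as `j + 2` is invertible, and subtracting
shows `e_{k+j} ∈ span H̄_k`. Then `e_m = u_m - ∑_t e_{k+t}` lies in the span too, so `H̄_k` spans,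
and any spanning set of a `d`-dimensional space contains `d` linearly independent vectors.
-/

open Submodule

lemma natCast_ne_zero_of_lt_ringChar {R : Type*} [NonAssocRing R] {n : ℕ} (hn : n ≠ 0)
    (h : n < ringChar R) : (n : R) ≠ 0 := fun h0 =>
  h.not_ge (Nat.le_of_dvd (Nat.pos_of_ne_zero hn) ((ringChar.spec R n).1 h0))

lemma IsAlgClosed.exists_pow_eq_one_ne_one {K : Type*} [Field K] [IsAlgClosed K] {n : ℕ}
    (hn : 2 ≤ n) (hnK : (n : K) ≠ 0) : ∃ ζ : K, ζ ^ n = 1 ∧ ζ ≠ 1 := by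
  have : NeZero (n : K) := ⟨hnK⟩
  obtain ⟨ζ, hζ⟩ := HasEnoughRootsOfUnity.exists_primitiveRoot K n
  exact ⟨ζ, hζ.pow_eq_one, hζ.ne_one (by omega)⟩

lemma Submodule.pi_mem_of_single_mem {ι K : Type*} [Fintype ι] [DecidableEq ι] [Semiring K]
    (W : Submodule K (ι → K)) {x : ι → K} (h : ∀ i, x i ≠ 0 → Pi.single i 1 ∈ W) : x ∈ W := by
  rw [pi_eq_sum_univ' x]
  refine W.sum_mem fun i _ => ?_
  by_cases hi : x i = 0
  · simp [hi]
  · exact W.smul_mem _ (h i hi)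

lemma single_mem_span_of_update_mem {ι K : Type*} [DecidableEq ι] [Field K]
    {S : Set (ι → K)} {x : ι → K} {i : ι} {c : K} (hx : x ∈ S)
    (hu : Function.update x i (c * x i) ∈ S) (hc : c ≠ 1) (hxi : x i ≠ 0) :
    Pi.single i 1 ∈ span K S := by
  have hdiff : x - Function.update x i (c * x i) = ((1 - c) * x i) • Pi.single i 1 := by
    ext j
    by_cases hj : j = i
    · subst hj; simp [sub_mul]
    · simp [hj]
  rw [← smul_mem_iff _ (mul_ne_zero (sub_ne_zero.2 hc.symm) hxi), ← hdiff]
  exact sub_mem (subset_span hx) (subset_span hu)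

lemma exists_linearIndependent_fin_of_span_eq_top {K V : Type*} [Field K] [AddCommGroup V]
    [Module K V] [FiniteDimensional K V] {s : Set V} {n : ℕ} (hn : Module.finrank K V = n)
    (hs : span K s = ⊤) : ∃ v : Fin n → V, (∀ i, v i ∈ s) ∧ LinearIndependent K v := by
  obtain ⟨f, hfs, -, hf⟩ := exists_fun_fin_finrank_span_eq K s
  have e : Module.finrank K (span K s) = n := by rw [hs, finrank_top, hn]
  exact ⟨f ∘ Fin.cast e.symm, fun i => hfs _, hf.comp _ (Fin.cast_injective _)⟩

section

variable {K : Type} {d k : ℕ}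

lemma eval_hpoly [CommRing K] (x : Fin d → K) (j : Fin (d - k)) :
    eval x (hpoly K d k j) =
      (∑ i : Fin d, if (i : ℕ) < k then x i ^ ((j : ℕ) + 2) else 0)
        - x ⟨k + j, by omega⟩ ^ ((j : ℕ) + 2) := by
  simp [hpoly, apply_ite (eval x)]

theorem update_mem_Hset [CommRing K] {x : Fin d → K} (hx : x ∈ Hset K d k) {t : Fin d}
    (ht : k ≤ t) {ζ : K} (hζ : ζ ^ ((t : ℕ) - k + 2) = 1) :
    Function.update x t (ζ * x t) ∈ Hset K d k := by
  intro j
  have hxj := hx j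
  rw [eval_hpoly] at hxj ⊢
  have hhead : ∀ i : Fin d, (i : ℕ) < k → Function.update x t (ζ * x t) i = x i :=
    fun i hi => Function.update_of_ne (Fin.ne_of_val_ne (by omega)) _ _
  have hsum : (∑ i : Fin d, if (i : ℕ) < k then Function.update x t (ζ * x t) i ^ ((j : ℕ) + 2)
      else 0) = ∑ i : Fin d, if (i : ℕ) < k then x i ^ ((j : ℕ) + 2) else 0 :=
    Finset.sum_congr rfl fun i _ => by
      split_ifs with hi
      · rw [hhead i hi]
      · rfl
  rw [hsum]
  by_cases htj : (t : ℕ) = k + j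
  · have htj' : (⟨k + j, by omega⟩ : Fin d) = t := Fin.ext htj.symm
    rw [show (t : ℕ) - k + 2 = j + 2 by omega] at hζ
    rw [htj'] at hxj ⊢
    rwa [Function.update_self, mul_pow, hζ, one_mul]
  · rwa [Function.update_of_ne (Fin.ne_of_val_ne (Ne.symm htj))]

def tailOnes [Zero K] [One K] (k : ℕ) : Fin d → K := fun t => if k ≤ (t : ℕ) then 1 else 0

lemma single_add_tailOnes_mem_Hset [CommRing K] {m : Fin d} (hm : (m : ℕ) < k) :
    Pi.single m 1 + tailOnes k ∈ Hset K d k := by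
  intro j
  have hhead (i : Fin d) :
      (if (i : ℕ) < k then (Pi.single m 1 + tailOnes k : Fin d → K) i ^ ((j : ℕ) + 2) else 0) =
        if i = m then 1 else 0 := by
    by_cases him : i = m
    · subst him; simp [tailOnes, hm, hm.not_ge]
    · by_cases hik : (i : ℕ) < k <;> simp [tailOnes, him, hik]
  have htail : (⟨k + j, by omega⟩ : Fin d) ≠ m := Fin.ne_of_val_ne (by dsimp only; omega)
  rw [eval_hpoly, Finset.sum_congr rfl fun i _ => hhead i]
  simp [htail, tailOnes]

theorem span_Hset_eq_top [Field K] [IsAlgClosed K] (hk : 0 < k)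
    (hK : ∀ n : ℕ, 2 ≤ n → n ≤ d - k + 1 → (n : K) ≠ 0) : span K (Hset K d k) = ⊤ := by
  set W := span K (Hset K d k)
  have htail (t : Fin d) (ht : k ≤ (t : ℕ)) : Pi.single t 1 ∈ W := by
    obtain ⟨ζ, hζ, hζ1⟩ := IsAlgClosed.exists_pow_eq_one_ne_one (K := K) (n := t - k + 2)
      (by omega) (hK _ (by omega) (by omega))
    have hu := single_add_tailOnes_mem_Hset (K := K) (m := (⟨0, by omega⟩ : Fin d)) hk
    refine single_mem_span_of_update_mem hu (update_mem_Hset hu ht hζ) hζ1 ?_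
    simp [tailOnes, ht, Fin.ext_iff, (show (t : ℕ) ≠ 0 by omega)]
  have htailOnes : tailOnes k ∈ W := W.pi_mem_of_single_mem fun t ht =>
    htail t (by by_contra h; simp [tailOnes, h] at ht)
  have hhead (m : Fin d) (hm : (m : ℕ) < k) : Pi.single m 1 ∈ W := by
    simpa using sub_mem (subset_span (single_add_tailOnes_mem_Hset hm)) htailOnes
  exact eq_top_iff.2 fun x _ => W.pi_mem_of_single_mem fun t _ =>
    if ht : (t : ℕ) < k then hhead t ht else htail t (by omega)

end

theorem Hbar_spans_general (d : ℕ) :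
    ∃ c : ℕ, 0 < c ∧ ∀ k : ℕ, 2 ≤ k → k ≤ d - 1 →
      ∀ (F : Type) [Field F] [Fintype F], c < ringChar F →
        ∃ v : Fin d → (Fin d → AlgebraicClosure F),
          (∀ i, v i ∈ Hset (AlgebraicClosure F) d k) ∧
          LinearIndependent (AlgebraicClosure F) v ∧
          Submodule.span (AlgebraicClosure F) (Hset (AlgebraicClosure F) d k) = ⊤ := by
  refine ⟨d + 1, d.succ_pos, fun k hk _ F _ _ hchar => ?_⟩
  have hK (n : ℕ) (hn : 2 ≤ n) (hnd : n ≤ d - k + 1) : (n : AlgebraicClosure F) ≠ 0 :=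
    natCast_ne_zero_of_lt_ringChar (by omega)
      (Algebra.ringChar_eq F (AlgebraicClosure F) ▸ by omega)
  have hspan := span_Hset_eq_top (by omega) hK
  obtain ⟨v, hvH, hv⟩ :=
    exists_linearIndependent_fin_of_span_eq_top (Module.finrank_fin_fun _) hspan
  exact ⟨v, hvH, hv, hspan⟩

/-- For every `2 ≤ k ≤ d−1`, if the characteristic is large enough
(depending only on `d`), then `H̄_k` contains `d` linearly independent vectors of
`F̄_q^d`, and it spans `F̄_q^d`. -/
theorem Hbar_spans (d : ℕ) (hd : 3 ≤ d) :
    ∃ c : ℕ, 0 < c ∧ ∀ k : ℕ, 2 ≤ k → k ≤ d - 1 →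
      ∀ (F : Type) [Field F] [Fintype F], c < ringChar F →
        ∃ v : Fin d → (Fin d → AlgebraicClosure F),
          (∀ i, v i ∈ Hset (AlgebraicClosure F) d k) ∧
          LinearIndependent (AlgebraicClosure F) v ∧
          Submodule.span (AlgebraicClosure F) (Hset (AlgebraicClosure F) d k) = ⊤ :=
  Hbar_spans_general d
end

section
/- Let k ≥ 2 and d−k ∈ {1, 2, 3}. There is a constant c > 0 depending only on d such that if the characteristic of F_q exceeds c, then for every point x ∈ H̄_k with x ≠ 0 the (d−k)×d Jacobian matrix (∂h_j/∂x_i)(x) has rank exactly d−k. -/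
open MvPolynomial

/-- The `(d−k) × d` Jacobian matrix `(∂h_j/∂x_i)(x)` of the system defining `H̄_k`. -/
noncomputable def jacH (K : Type) [CommRing K] (d k : ℕ) (x : Fin d → K) :
    Matrix (Fin (d - k)) (Fin d) K :=
  Matrix.of fun j i => eval x (pderiv i (hpoly K d k j))

/-!
A relation `∑ⱼ gⱼ ∇hⱼ(x) = 0` reads, in the column of `x_{k+j}`, `(j+1) gⱼ x_{k+j}^j = 0`: so
`gⱼ ≠ 0` forces `x_{k+j} = 0`, and then `hⱼ(x) = 0` makes the power sum `p_{j+1}` of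
`x_1, …, x_k` vanish. In the first `k` columns it says that every `x_i` is a root of `t·Q(t)`,
where `Q(t) = ∑ⱼ (j+1) gⱼ t^{j-1}` has degree at most `2` because `d − k ≤ 3`. Summing
`x_i^m Q(x_i)` over the nonzero `x_i` gives a three-term recurrence for their power sums, valid for
all `m ∈ ℤ`; run backwards from the vanishing power sums, it forces `p_0`, the number of nonzero
`x_i`, to vanish in the field, hence in `ℕ` as the characteristic exceeds `k`. So
`x_1 = ⋯ = x_k = 0`, and the equations `hⱼ(x) = 0` then give `x = 0`.
-/

open Finset Matrix

section PowerSums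

variable {ι K : Type*} [Field K]

lemma card_eq_zero_of_cubic_relation (s : Finset ι) (x : ι → K) (hx : ∀ i ∈ s, x i ≠ 0)
    (c₀ c₁ c₂ : K) (hc : c₀ ≠ 0 ∨ c₁ ≠ 0 ∨ c₂ ≠ 0)
    (hroot : ∀ i ∈ s, c₀ * x i + c₁ * x i ^ 2 + c₂ * x i ^ 3 = 0)
    (h₀ : c₀ ≠ 0 → ∑ i ∈ s, x i ^ 2 = 0) (h₁ : c₁ ≠ 0 → ∑ i ∈ s, x i ^ 3 = 0) :
    (#s : K) = 0 := by
  set p : ℤ → K := fun m => ∑ i ∈ s, x i ^ m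
  have hrec (m : ℤ) : c₀ * p (m + 1) + c₁ * p (m + 2) + c₂ * p (m + 3) = 0 := by
    simp only [p, mul_sum, ← sum_add_distrib]
    refine sum_eq_zero fun i hi => ?_
    simp only [zpow_add₀ (hx i hi), zpow_ofNat]
    linear_combination x i ^ m * hroot i hi
  have hp₀ : p 0 = #s := by simp [p]
  have hp₂ : c₀ ≠ 0 → p 2 = 0 := by simpa [p] using h₀
  have hp₃ : c₁ ≠ 0 → p 3 = 0 := by simpa [p] using h₁
  rw [← hp₀]
  by_cases hc₀ : c₀ = 0
  · by_cases hc₁ : c₁ = 0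
    · have hc₂ : c₂ ≠ 0 := by tauto
      simpa [hc₀, hc₁, hc₂] using hrec (-3)
    · have hp₂' : p 2 = 0 := by simpa [hc₀, hc₁, hp₃ hc₁] using hrec 0
      have hp₁ : p 1 = 0 := by simpa [hc₀, hc₁, hp₂'] using hrec (-1)
      simpa [hc₀, hc₁, hp₁] using hrec (-2)
  · have hp₁ : c₁ * p 1 = 0 := by
      by_cases hc₁ : c₁ = 0
      · simp [hc₁]
      · simpa [hc₀, hc₁, hp₂ hc₀, hp₃ hc₁] using hrec 0
    simpa [hc₀, hp₂ hc₀, hp₁] using hrec (-1)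

lemma eq_zero_of_cubic_relation (s : Finset ι) (x : ι → K)
    (hchar : ∀ n ≤ #s, (n : K) = 0 → n = 0)
    (c₀ c₁ c₂ : K) (hc : c₀ ≠ 0 ∨ c₁ ≠ 0 ∨ c₂ ≠ 0)
    (hroot : ∀ i ∈ s, c₀ * x i + c₁ * x i ^ 2 + c₂ * x i ^ 3 = 0)
    (h₀ : c₀ ≠ 0 → ∑ i ∈ s, x i ^ 2 = 0) (h₁ : c₁ ≠ 0 → ∑ i ∈ s, x i ^ 3 = 0) :
    ∀ i ∈ s, x i = 0 := by
  classical
  have hsum (e : ℕ) (he : e ≠ 0) : ∑ i ∈ s with x i ≠ 0, x i ^ e = ∑ i ∈ s, x i ^ e :=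
    sum_filter_of_ne fun i _ h hxi => h (by simp [hxi, he])
  have hcard : (#{i ∈ s | x i ≠ 0} : K) = 0 :=
    card_eq_zero_of_cubic_relation _ x (fun i hi => (mem_filter.1 hi).2) c₀ c₁ c₂ hc
      (fun i hi => hroot i (mem_filter.1 hi).1) (by rwa [hsum 2 two_ne_zero])
      (by rwa [hsum 3 three_ne_zero])
  have hempty := hchar _ (card_filter_le _ _) hcard
  simpa [filter_eq_empty_iff] using hempty

end PowerSums

/-- The column of `x_{k+j+1}`, the only variable besides `x_1, …, x_k` occurring in `h_{j+1}`. -/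
def pivotCol {d k : ℕ} (j : Fin (d - k)) : Fin d := ⟨k + j, by omega⟩

section Jacobian

variable {K : Type} {d k : ℕ}

lemma eval_pderiv_X_pow {σ : Type*} [DecidableEq σ] [CommRing K] (x : σ → K) (i i' : σ)
    (e : ℕ) :
    eval x (pderiv i (X i' ^ e : MvPolynomial σ K)) = if i' = i then e * x i' ^ (e - 1) else 0 := by
  by_cases h : i' = i
  · subst h; simp
  · simp [h]

lemma jacH_apply [CommRing K] (x : Fin d → K) (j : Fin (d - k)) (i : Fin d) :
    jacH K d k x j i = (if (i : ℕ) < k then ((j : ℕ) + 2 : K) * x i ^ ((j : ℕ) + 1) else 0)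
      - (if pivotCol j = i then ((j : ℕ) + 2 : K) * x (pivotCol j) ^ ((j : ℕ) + 1) else 0) := by
  rw [jacH, Matrix.of_apply, hpoly, ← sum_filter]
  simp only [map_sub, map_sum, eval_pderiv_X_pow, sum_ite_eq', mem_filter, mem_univ, true_and]
  push_cast [Nat.add_sub_cancel]
  rfl

lemma vecMul_jacH_of_lt [CommRing K] (x : Fin d → K) (g : Fin (d - k) → K) {i : Fin d}
    (hi : (i : ℕ) < k) :
    (g ᵥ* jacH K d k x) i = ∑ j, g j * (((j : ℕ) + 2 : K) * x i ^ ((j : ℕ) + 1)) := by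
  simp only [vecMul, dotProduct]
  refine sum_congr rfl fun j _ => ?_
  rw [jacH_apply, if_pos hi, if_neg (by simp [Fin.ext_iff, pivotCol]; omega), sub_zero]

lemma vecMul_jacH_pivotCol [CommRing K] (x : Fin d → K) (g : Fin (d - k) → K) (j : Fin (d - k)) :
    (g ᵥ* jacH K d k x) (pivotCol j) =
      -(g j * (((j : ℕ) + 2 : K) * x (pivotCol j) ^ ((j : ℕ) + 1))) := by
  simp only [vecMul, dotProduct]
  rw [sum_eq_single j]
  · simp [jacH_apply, pivotCol]
  · intro j' _ hj'
    simp [jacH_apply, pivotCol, Fin.val_inj, hj']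
  · simp

lemma sum_pow_eq_of_mem_Hset [CommRing K] {x : Fin d → K} (hx : x ∈ Hset K d k)
    (j : Fin (d - k)) :
    ∑ i ∈ {i : Fin d | (i : ℕ) < k}, x i ^ ((j : ℕ) + 2) = x (pivotCol j) ^ ((j : ℕ) + 2) := by
  have hj := hx j
  simp only [hpoly, ← sum_filter, map_sub, map_sum, eval_pow, eval_X, sub_eq_zero] at hj
  exact hj

end Jacobian

section Relation

variable {K : Type} [Field K] {d k : ℕ}

/-- A relation `g ᵥ* jacH K d k x = 0` says, in the columns `i < k`, that every `x_i` is a root of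
`∑ j, relCoeff g j * t ^ (j + 1)`, the derivative of `∑ j, g j * t ^ (j + 2)`. -/
def relCoeff (g : Fin (d - k) → K) (j : ℕ) : K :=
  if h : j < d - k then g ⟨j, h⟩ * (j + 2) else 0

lemma exists_ne_zero_of_relCoeff_ne_zero {g : Fin (d - k) → K} {j : ℕ} (hj : relCoeff g j ≠ 0) :
    ∃ h : j < d - k, g ⟨j, h⟩ ≠ 0 := by
  rw [relCoeff] at hj
  split_ifs at hj with h
  · exact ⟨h, left_ne_zero_of_mul hj⟩
  · exact absurd rfl hj

lemma relCoeff_ne_zero_of_ne_zero (hdk : d - k ≤ 3)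
    (hweight : ∀ j : Fin (d - k), ((j : ℕ) + 2 : K) ≠ 0)
    {g : Fin (d - k) → K} (hg : g ≠ 0) :
    relCoeff g 0 ≠ 0 ∨ relCoeff g 1 ≠ 0 ∨ relCoeff g 2 ≠ 0 := by
  obtain ⟨j, hj⟩ := Function.ne_iff.1 hg
  have hcj : relCoeff g j ≠ 0 := by
    rw [relCoeff, dif_pos j.isLt]
    exact mul_ne_zero hj (hweight j)
  rcases (show (j : ℕ) = 0 ∨ (j : ℕ) = 1 ∨ (j : ℕ) = 2 by omega) with h | h | h
  · exact Or.inl (h ▸ hcj)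
  · exact Or.inr (Or.inl (h ▸ hcj))
  · exact Or.inr (Or.inr (h ▸ hcj))

lemma relCoeff_cubic_eq_zero (hdk : d - k ≤ 3) {x : Fin d → K} {g : Fin (d - k) → K}
    (hgx : g ᵥ* jacH K d k x = 0) {i : Fin d} (hi : (i : ℕ) < k) :
    relCoeff g 0 * x i + relCoeff g 1 * x i ^ 2 + relCoeff g 2 * x i ^ 3 = 0 := by
  have hcol := congrFun hgx i
  rw [vecMul_jacH_of_lt _ _ hi] at hcol
  have hsum : ∑ j ∈ range 3, relCoeff g j * x i ^ (j + 1) = 0 := by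
    rw [← sum_subset (range_subset_range.2 hdk) fun j _ hj => by
        rw [relCoeff, dif_neg (by simpa using hj), zero_mul],
      ← Fin.sum_univ_eq_sum_range (fun j => relCoeff g j * x i ^ (j + 1))]
    simpa [relCoeff, mul_assoc] using hcol
  simpa [sum_range_succ] using hsum

lemma sum_pow_eq_zero_of_relCoeff_ne_zero (hweight : ∀ j : Fin (d - k), ((j : ℕ) + 2 : K) ≠ 0)
    {x : Fin d → K} (hx : x ∈ Hset K d k) {g : Fin (d - k) → K} (hgx : g ᵥ* jacH K d k x = 0)
    {j : ℕ} (hj : relCoeff g j ≠ 0) :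
    ∑ i ∈ {i : Fin d | (i : ℕ) < k}, x i ^ (j + 2) = 0 := by
  obtain ⟨hjd, hgj⟩ := exists_ne_zero_of_relCoeff_ne_zero hj
  have hcol := congrFun hgx (pivotCol ⟨j, hjd⟩)
  rw [vecMul_jacH_pivotCol] at hcol
  have hpivot : x (pivotCol ⟨j, hjd⟩) = 0 := by simpa [hgj, hweight ⟨j, hjd⟩] using hcol
  simpa [hpivot] using sum_pow_eq_of_mem_Hset hx ⟨j, hjd⟩

lemma eq_zero_of_vecMul_jacH_eq_zero (hdk : d - k ≤ 3)
    (hchar : ∀ n ≤ max k (d - k + 1), (n : K) = 0 → n = 0)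
    {x : Fin d → K} (hx : x ∈ Hset K d k) {g : Fin (d - k) → K} (hg : g ≠ 0)
    (hgx : g ᵥ* jacH K d k x = 0) : x = 0 := by
  have hweight (j : Fin (d - k)) : ((j : ℕ) + 2 : K) ≠ 0 := fun h => by
    have := hchar ((j : ℕ) + 2) (le_max_of_le_right (by omega)) (by exact_mod_cast h)
    omega
  have hlow (i : Fin d) (hi : (i : ℕ) < k) : x i = 0 :=
    eq_zero_of_cubic_relation {i : Fin d | (i : ℕ) < k} x
      (fun n hn => hchar n (le_max_of_le_left (hn.trans (by simp [Fin.card_filter_val_lt]))))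
      _ _ _ (relCoeff_ne_zero_of_ne_zero hdk hweight hg)
      (fun i hi => relCoeff_cubic_eq_zero hdk hgx (by simpa using hi))
      (sum_pow_eq_zero_of_relCoeff_ne_zero hweight hx hgx)
      (sum_pow_eq_zero_of_relCoeff_ne_zero hweight hx hgx) i (by simpa using hi)
  funext i
  by_cases hi : (i : ℕ) < k
  · exact hlow i hi
  · set j : Fin (d - k) := ⟨i - k, by omega⟩
    have hij : pivotCol j = i := by ext; simp [pivotCol, j]; omega
    have hsum := sum_pow_eq_of_mem_Hset hx j
    rw [sum_eq_zero fun i' hi' => by rw [hlow i' (by simpa using hi'), zero_pow (by omega)],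
      hij] at hsum
    exact pow_eq_zero_iff (by omega) |>.1 hsum.symm

theorem rank_jacH_eq (hdk : d - k ≤ 3) (hchar : ∀ n ≤ max k (d - k + 1), (n : K) = 0 → n = 0)
    {x : Fin d → K} (hx : x ∈ Hset K d k) (hx0 : x ≠ 0) : (jacH K d k x).rank = d - k := by
  refine (LinearIndependent.rank_matrix ?_).trans (Fintype.card_fin _)
  rw [Fintype.linearIndependent_iff]
  intro g hg
  by_contra! hg0
  exact hx0 (eq_zero_of_vecMul_jacH_eq_zero hdk hchar hx (Function.ne_iff.2 hg0)
    (by rwa [vecMul_eq_sum]))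

end Relation

theorem Hbar_smooth_small_codim_general (d k : ℕ)
    (hdk : d - k = 1 ∨ d - k = 2 ∨ d - k = 3) :
    ∃ c : ℕ, 0 < c ∧ ∀ (F : Type) [Field F] [Fintype F], c < ringChar F →
      ∀ x ∈ Hset (AlgebraicClosure F) d k, x ≠ 0 →
        (jacH (AlgebraicClosure F) d k x).rank = d - k := by
  refine ⟨d + 1, d.succ_pos, fun F _ _ hc x hx hx0 => rank_jacH_eq (by omega) ?_ hx hx0⟩
  intro n hn h
  rw [ringChar.spec, ← Algebra.ringChar_eq F] at h
  exact Nat.eq_zero_of_dvd_of_lt h (by omega)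

/-- For `k ≥ 2` and `d−k ∈ {1,2,3}`, if the characteristic is large
enough (depending only on `d`), then at every nonzero point of `H̄_k` the Jacobian
matrix has rank exactly `d−k`. -/
theorem Hbar_smooth_small_codim (d k : ℕ) (hk : 2 ≤ k)
    (hdk : d - k = 1 ∨ d - k = 2 ∨ d - k = 3) :
    ∃ c : ℕ, 0 < c ∧ ∀ (F : Type) [Field F] [Fintype F], c < ringChar F →
      ∀ x ∈ Hset (AlgebraicClosure F) d k, x ≠ 0 →
        (jacH (AlgebraicClosure F) d k x).rank = d - k :=
  Hbar_smooth_small_codim_general d k hdk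
end

section
/- Let 2 ≤ k ≤ d−1 and 1 ≤ p, r ≤ ∞. If there exists a constant C > 0 such that for all prime powers q with sufficiently large characteristic and all f : F_q^d → ℂ one has ‖f∗dσ_k‖_{L^r(dx)} ≤ C‖f‖_{L^p(dx)}, then the point (1/p, 1/r) lies in the convex hull in ℝ² of the four points (0,0), (0,1), (1,1), and (d/(2d−k), (d−k)/(2d−k)). -/
open MvPolynomial

/-!
Test the averaging inequality on the delta function at the origin and on the indicator of `H_k`.
Since `H_k = -H_k` and `|H_k| ≤ (d-k+1)^{d-k} q^k` (over a point `(x_1, …, x_k)` each remaining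
coordinate `x_{k+j}` is a `(j+1)`-th root of `x_1^{j+1} + ⋯ + x_k^{j+1}`), the two tests give
`q^s ≤ const` for `s = d/p - d/r - k(1 - 1/r)` and for `s = (d-k)/p - d/r`. Letting `q` run through
the large primes forces both exponents to be `≤ 0`, and together with `0 ≤ 1/p` and `1/r ≤ 1`
these inequalities describe the quadrilateral.
-/

open Finset Real
open scoped ENNReal

section Variety

variable {F : Type} [Field F] [Fintype F] {d k : ℕ}

lemma sum_ite_lt_eq_sum_castLE {M : Type*} [AddCommMonoid M] (hkd : k ≤ d) (g : Fin d → M) :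
    (∑ i : Fin d, if (i : ℕ) < k then g i else 0) = ∑ i : Fin k, g (Fin.castLE hkd i) := by
  rw [← Finset.sum_filter]
  exact Finset.sum_bij' (fun i hi => ⟨i, (Finset.mem_filter.1 hi).2⟩) (fun i _ => Fin.castLE hkd i)
    (by simp) (by simp) (by simp) (by simp) (by simp)

lemma mem_Hfin (hkd : k ≤ d) {x : Fin d → F} :
    x ∈ Hfin F d k ↔ ∀ j : Fin (d - k),
      ∑ i : Fin k, x (Fin.castLE hkd i) ^ ((j : ℕ) + 2) = x ⟨k + j, by omega⟩ ^ ((j : ℕ) + 2) := by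
  classical
  simp [Hfin, hpoly, sum_ite_lt_eq_sum_castLE hkd, sub_eq_zero]

lemma smul_mem_Hfin (hkd : k ≤ d) (c : F) {x : Fin d → F} (hx : x ∈ Hfin F d k) :
    c • x ∈ Hfin F d k := by
  rw [mem_Hfin hkd] at hx ⊢
  intro j
  simp [mul_pow, ← Finset.mul_sum, hx j]

open scoped Classical in
lemma card_Hfin_fiber_le (hkd : k ≤ d) (y : Fin k → F) :
    #{x ∈ Hfin F d k | (fun i => x (Fin.castLE hkd i)) = y} ≤ (d - k + 1) ^ (d - k) := by
  let roots (j : Fin (d - k)) : Finset F :=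
    Polynomial.nthRootsFinset ((j : ℕ) + 2) (∑ i, y i ^ ((j : ℕ) + 2))
  let tail (x : Fin d → F) (j : Fin (d - k)) : F := x ⟨k + j, by omega⟩
  let fiber : Finset (Fin d → F) := {x ∈ Hfin F d k | (fun i => x (Fin.castLE hkd i)) = y}
  have maps : Set.MapsTo tail fiber (Fintype.piFinset roots) := by
    intro x hx
    obtain ⟨hxH, rfl⟩ := Finset.mem_filter.1 hx
    rw [Finset.mem_coe, Fintype.mem_piFinset]
    intro j
    simp [roots, tail, (mem_Hfin hkd).1 hxH j]
  have inj : Set.InjOn tail fiber := by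
    intro x hx x' hx' htail
    have hhead := (Finset.mem_filter.1 hx).2.trans (Finset.mem_filter.1 hx').2.symm
    ext i
    rcases lt_or_ge (i : ℕ) k with hik | hik
    · simpa using congrFun hhead ⟨i, hik⟩
    · simpa [tail, Nat.add_sub_cancel' hik] using congrFun htail ⟨i - k, by omega⟩
  calc _ ≤ #(Fintype.piFinset roots) := Finset.card_le_card_of_injOn _ maps inj
    _ = ∏ j, #(roots j) := Fintype.card_piFinset roots
    _ ≤ ∏ _j : Fin (d - k), (d - k + 1) := by
      refine Finset.prod_le_prod' fun j _ => ?_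
      refine (Multiset.toFinset_card_le _).trans ((Polynomial.card_nthRoots _ _).trans ?_)
      omega
    _ = _ := by simp

open scoped Classical in
lemma card_Hfin_le (hkd : k ≤ d) :
    #(Hfin F d k) ≤ (d - k + 1) ^ (d - k) * Fintype.card F ^ k := by
  simpa using Finset.card_le_mul_card_image_of_maps_to (t := Finset.univ)
    (f := fun (x : Fin d → F) i => x (Fin.castLE hkd i)) (fun _ _ => Finset.mem_univ _) _
    (fun y _ => card_Hfin_fiber_le hkd y)

lemma zero_mem_Hfin (hkd : k ≤ d) : (0 : Fin d → F) ∈ Hfin F d k := by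
  simp [mem_Hfin hkd]

lemma neg_mem_Hfin (hkd : k ≤ d) {x : Fin d → F} (hx : x ∈ Hfin F d k) : -x ∈ Hfin F d k := by
  simpa using smul_mem_Hfin hkd (-1) hx

lemma log_card_Hfin_le (hkd : k ≤ d) :
    log #(Hfin F d k) ≤ log ((d - k + 1) ^ (d - k) : ℕ) + k * log (Fintype.card F) := by
  have hpos : (0 : ℝ) < #(Hfin F d k) := by
    exact_mod_cast (Finset.card_pos.2 ⟨0, zero_mem_Hfin hkd⟩)
  have hcard : (#(Hfin F d k) : ℝ) ≤ ((d - k + 1) ^ (d - k) : ℕ) * (Fintype.card F : ℝ) ^ k := by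
    exact_mod_cast card_Hfin_le hkd
  calc log #(Hfin F d k) ≤ log (((d - k + 1) ^ (d - k) : ℕ) * (Fintype.card F : ℝ) ^ k) :=
        log_le_log hpos hcard
    _ = _ := by
      rw [log_mul (by positivity) (by positivity), log_pow]

end Variety

section LpNorm

variable {F : Type} [Fintype F] {d : ℕ} {p : ℝ≥0∞}

lemma toReal_one_div_le_one (hp : 1 ≤ p) : (1 / p).toReal ≤ 1 := by
  simpa using ENNReal.toReal_mono ENNReal.one_ne_top (ENNReal.inv_le_one.2 hp)

lemma lpNorm_const_mul (hp : p ≠ 0) (c : ℂ) (f : (Fin d → F) → ℂ) :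
    lpNorm p (fun x => c * f x) = ‖c‖ * lpNorm p f := by
  unfold lpNorm
  split_ifs with htop
  · simp only [norm_mul]
    exact (Real.mul_iSup_of_nonneg (norm_nonneg c) _).symm
  · have ht : 0 < p.toReal := ENNReal.toReal_pos hp htop
    simp_rw [norm_mul, Real.mul_rpow (norm_nonneg c) (norm_nonneg _), ← Finset.mul_sum,
      mul_left_comm _ (‖c‖ ^ p.toReal)]
    rw [Real.mul_rpow (by positivity) (by positivity), ← Real.rpow_mul (norm_nonneg c),
      mul_one_div_cancel ht.ne', Real.rpow_one]

lemma lpNorm_indicator_one (hp : p ≠ 0) {S : Finset (Fin d → F)} (hS : S.Nonempty) :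
    lpNorm p ((S : Set (Fin d → F)).indicator 1)
      = (((Fintype.card F : ℝ) ^ d)⁻¹ * #S) ^ (1 / p).toReal := by
  obtain ⟨x₀, hx₀⟩ := hS
  unfold lpNorm
  split_ifs with htop
  · have : Nonempty (Fin d → F) := ⟨x₀⟩
    refine le_antisymm (ciSup_le fun x => ?_) (le_ciSup_of_le (Finite.bddAbove_range _) x₀ ?_)
    · by_cases hx : x ∈ S <;> simp [htop, hx]
    · simp [htop, hx₀]
  · have ht : 0 < p.toReal := ENNReal.toReal_pos hp htop
    have hnorm (x : Fin d → F) :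
        ‖(S : Set (Fin d → F)).indicator (1 : (Fin d → F) → ℂ) x‖ ^ p.toReal
          = (S : Set (Fin d → F)).indicator 1 x := by
      by_cases hx : x ∈ S <;> simp [hx, Real.zero_rpow ht.ne']
    simp [hnorm, Finset.sum_indicator_subset _ (subset_univ S)]

lemma rpow_mul_norm_le_lpNorm (hp : p ≠ 0) (f : (Fin d → F) → ℂ) (x : Fin d → F) :
    ((Fintype.card F : ℝ) ^ d)⁻¹ ^ (1 / p).toReal * ‖f x‖ ≤ lpNorm p f := by
  unfold lpNorm
  split_ifs with htop
  · have : Nonempty (Fin d → F) := ⟨x⟩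
    simpa [htop] using le_ciSup (Finite.bddAbove_range fun y => ‖f y‖) x
  · have ht : 0 < p.toReal := ENNReal.toReal_pos hp htop
    rw [ENNReal.toReal_div, ENNReal.toReal_one]
    calc ((Fintype.card F : ℝ) ^ d)⁻¹ ^ (1 / p.toReal) * ‖f x‖
        = (((Fintype.card F : ℝ) ^ d)⁻¹ * ‖f x‖ ^ p.toReal) ^ (1 / p.toReal) := by
          rw [Real.mul_rpow (by positivity) (by positivity), ← Real.rpow_mul (norm_nonneg _),
            mul_one_div_cancel ht.ne', Real.rpow_one]
      _ ≤ _ := by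
          gcongr
          exact Finset.single_le_sum (f := fun y => ‖f y‖ ^ p.toReal)
            (fun y _ => by positivity) (Finset.mem_univ x)

end LpNorm

section Convolution

variable {F : Type} [Field F] [Fintype F] {d : ℕ}

lemma convMeas_indicator_zero (V : Finset (Fin d → F)) :
    convMeas V (({0} : Set (Fin d → F)).indicator 1)
      = fun y => (#V : ℂ)⁻¹ * (V : Set (Fin d → F)).indicator 1 y := by
  classical
  ext y
  simp [convMeas, Set.indicator_apply, sub_eq_zero]

lemma convMeas_indicator_self_zero {V : Finset (Fin d → F)} (hV : V.Nonempty)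
    (hneg : ∀ x ∈ V, -x ∈ V) :
    convMeas V ((V : Set (Fin d → F)).indicator 1) 0 = 1 := by
  have hterm : ∀ x ∈ V, (V : Set (Fin d → F)).indicator (1 : (Fin d → F) → ℂ) (0 - x) = 1 :=
    fun x hx => by simp [hneg x hx]
  rw [convMeas, Finset.sum_congr rfl hterm]
  simp [hV.card_ne_zero]

end Convolution

section TestFunctions

variable {F : Type} [Field F] [Fintype F] {d : ℕ} {p r : ℝ≥0∞} {C : ℝ} {V : Finset (Fin d → F)}

lemma averaging_bound_delta (hp : p ≠ 0) (hr : r ≠ 0) (hV : V.Nonempty)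
    (hbound : ∀ f, lpNorm r (convMeas V f) ≤ C * lpNorm p f) :
    (#V : ℝ)⁻¹ * (((Fintype.card F : ℝ) ^ d)⁻¹ * #V) ^ (1 / r).toReal
      ≤ C * ((Fintype.card F : ℝ) ^ d)⁻¹ ^ (1 / p).toReal := by
  have h := hbound (({0} : Set (Fin d → F)).indicator 1)
  rw [convMeas_indicator_zero, lpNorm_const_mul hr, lpNorm_indicator_one hr hV,
    ← Finset.coe_singleton, lpNorm_indicator_one hp (singleton_nonempty 0)] at h
  simpa using h

lemma averaging_bound_indicator_self (hp : p ≠ 0) (hr : r ≠ 0) (hV : V.Nonempty)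
    (hneg : ∀ x ∈ V, -x ∈ V)
    (hbound : ∀ f, lpNorm r (convMeas V f) ≤ C * lpNorm p f) :
    ((Fintype.card F : ℝ) ^ d)⁻¹ ^ (1 / r).toReal
      ≤ C * (((Fintype.card F : ℝ) ^ d)⁻¹ * #V) ^ (1 / p).toReal := by
  calc ((Fintype.card F : ℝ) ^ d)⁻¹ ^ (1 / r).toReal
      = ((Fintype.card F : ℝ) ^ d)⁻¹ ^ (1 / r).toReal
        * ‖convMeas V ((V : Set (Fin d → F)).indicator 1) 0‖ := by
        rw [convMeas_indicator_self_zero hV hneg, norm_one, mul_one]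
    _ ≤ lpNorm r (convMeas V ((V : Set (Fin d → F)).indicator 1)) :=
        rpow_mul_norm_le_lpNorm hr _ 0
    _ ≤ C * lpNorm p ((V : Set (Fin d → F)).indicator 1) := hbound _
    _ = C * (((Fintype.card F : ℝ) ^ d)⁻¹ * #V) ^ (1 / p).toReal := by
        rw [lpNorm_indicator_one hp hV]

end TestFunctions

section LogAlgebra

variable {Q N C a b K : ℝ} {d k : ℕ}

lemma mul_log_le_of_delta_test (hQ : 0 < Q) (hN : 0 < N) (hC : 0 < C) (hb : b ≤ 1)
    (hNQ : log N ≤ K + k * log Q) (h : N⁻¹ * ((Q ^ d)⁻¹ * N) ^ b ≤ C * ((Q ^ d)⁻¹) ^ a) :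
    (d * a - d * b - k * (1 - b)) * log Q ≤ log C + (1 - b) * K := by
  have hlog := Real.log_le_log (by positivity) h
  rw [Real.log_mul (by positivity) (by positivity), Real.log_mul (by positivity) (by positivity),
    Real.log_inv, Real.log_rpow (by positivity), Real.log_rpow (by positivity),
    Real.log_mul (by positivity) (by positivity), Real.log_inv, Real.log_pow] at hlog
  nlinarith [mul_le_mul_of_nonneg_left hNQ (sub_nonneg.2 hb)]

lemma mul_log_le_of_indicator_test (hQ : 0 < Q) (hN : 0 < N) (hC : 0 < C) (ha : 0 ≤ a)
    (hNQ : log N ≤ K + k * log Q) (h : ((Q ^ d)⁻¹) ^ b ≤ C * ((Q ^ d)⁻¹ * N) ^ a) :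
    ((d - k) * a - d * b) * log Q ≤ log C + a * K := by
  have hlog := Real.log_le_log (by positivity) h
  rw [Real.log_mul (by positivity) (by positivity), Real.log_rpow (by positivity),
    Real.log_rpow (by positivity), Real.log_mul (by positivity) (by positivity), Real.log_inv,
    Real.log_pow] at hlog
  nlinarith [mul_le_mul_of_nonneg_left hNQ ha]

end LogAlgebra

lemma nonpos_of_forall_prime_mul_log_le {s K : ℝ} {c : ℕ}
    (h : ∀ q : ℕ, q.Prime → c < q → s * log q ≤ K) : s ≤ 0 := by
  by_contra! hs
  have hlim : Filter.Tendsto (fun q : ℕ => s * log q) Filter.atTop Filter.atTop :=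
    (tendsto_log_atTop.comp tendsto_natCast_atTop_atTop).const_mul_atTop hs
  obtain ⟨n, hn⟩ := Filter.eventually_atTop.1 (hlim.eventually_gt_atTop K)
  obtain ⟨q, hqn, hq⟩ := Nat.exists_infinite_primes (max n (c + 1))
  exact (hn q (le_of_max_le_left hqn)).not_ge (h q hq (by omega))

section ConvexHull

lemma smul_add_smul_add_smul_mem_convexHull {E : Type*} [AddCommGroup E] [Module ℝ E]
    {s : Set E} {x y z : E} (hx : x ∈ s) (hy : y ∈ s) (hz : z ∈ s) {α β γ : ℝ}
    (hα : 0 ≤ α) (hβ : 0 ≤ β) (hγ : 0 ≤ γ) (hsum : α + β + γ = 1) :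
    α • x + β • y + γ • z ∈ convexHull ℝ s := by
  have hmem := (convex_convexHull ℝ s).sum_mem (t := Finset.univ) (w := ![α, β, γ])
    (z := ![x, y, z]) (by simp [Fin.forall_fin_succ, hα, hβ, hγ])
    (by simpa [Fin.sum_univ_three] using hsum)
    (by simp [Fin.forall_fin_succ, subset_convexHull ℝ s hx, subset_convexHull ℝ s hy,
      subset_convexHull ℝ s hz])
  simpa [Fin.sum_univ_three] using hmem

lemma mem_convexHull_of_exponents_nonpos {d k a b : ℝ} (hk : 0 < k) (hkd : k < 2 * d)
    (ha : 0 ≤ a) (hb : b ≤ 1) (h₁ : (d - k) * a - d * b ≤ 0)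
    (h₂ : d * a - d * b - k * (1 - b) ≤ 0) :
    (a, b) ∈ convexHull ℝ {((0 : ℝ), (0 : ℝ)), (0, 1), (1, 1),
      (d / (2 * d - k), (d - k) / (2 * d - k))} := by
  rcases le_total a b with hab | hab
  · have hcomb : (a, b) = (1 - b) • ((0 : ℝ), (0 : ℝ)) + (b - a) • ((0 : ℝ), (1 : ℝ))
        + a • ((1 : ℝ), (1 : ℝ)) := by
      ext <;> simp
    rw [hcomb]
    exact smul_add_smul_add_smul_mem_convexHull (by simp) (by simp) (by simp)
      (by linarith) (by linarith) ha (by ring)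
  · have h2dk : 2 * d - k ≠ 0 := by linarith
    have hcomb : (a, b) = ((k - d * a + (d - k) * b) / k) • ((0 : ℝ), (0 : ℝ))
        + ((d * b - (d - k) * a) / k) • ((1 : ℝ), (1 : ℝ))
        + ((2 * d - k) * (a - b) / k) • (d / (2 * d - k), (d - k) / (2 * d - k)) := by
      ext <;> simp only [Prod.smul_mk, Prod.mk_add_mk, smul_eq_mul, mul_zero, mul_one] <;>
        rw [div_mul_div_comm, mul_comm k, mul_assoc, mul_div_mul_left _ _ h2dk] <;>
        field_simp <;> ring
    rw [hcomb]
    exact smul_add_smul_add_smul_mem_convexHull (by simp) (by simp) (by simp)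
      (div_nonneg (by linarith) hk.le) (div_nonneg (by linarith) hk.le)
      (div_nonneg (by nlinarith) hk.le) (by field_simp; ring)

end ConvexHull

section Averaging

variable {F : Type} [Field F] [Fintype F] {d k : ℕ}

lemma exponent_bounds_of_averaging_bound (hkd : k ≤ d) {p r : ℝ≥0∞} (hp : p ≠ 0) (hr : 1 ≤ r)
    {C : ℝ} (hC : 0 < C)
    (hbound : ∀ f, lpNorm r (convMeas (Hfin F d k) f) ≤ C * lpNorm p f) :
    (d * (1 / p).toReal - d * (1 / r).toReal - k * (1 - (1 / r).toReal))
        * log (Fintype.card F)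
      ≤ log C + (1 - (1 / r).toReal) * log ((d - k + 1) ^ (d - k) : ℕ) ∧
    ((d - k) * (1 / p).toReal - d * (1 / r).toReal) * log (Fintype.card F)
      ≤ log C + (1 / p).toReal * log ((d - k + 1) ^ (d - k) : ℕ) := by
  have hH : (Hfin F d k).Nonempty := ⟨0, zero_mem_Hfin hkd⟩
  have hq : (0 : ℝ) < Fintype.card F := by exact_mod_cast Fintype.card_pos
  have hN : (0 : ℝ) < #(Hfin F d k) := by exact_mod_cast hH.card_pos
  have hr0 : r ≠ 0 := (zero_lt_one.trans_le hr).ne'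
  exact ⟨mul_log_le_of_delta_test hq hN hC (toReal_one_div_le_one hr) (log_card_Hfin_le hkd)
    (averaging_bound_delta hp hr0 hH hbound),
    mul_log_le_of_indicator_test hq hN hC ENNReal.toReal_nonneg (log_card_Hfin_le hkd)
      (averaging_bound_indicator_self hp hr0 hH (fun _ => neg_mem_Hfin hkd) hbound)⟩

end Averaging

open scoped ENNReal in
theorem averaging_Hk_necessary_general (d k : ℕ) (hk2 : 2 ≤ k) (hkd : k ≤ d - 1)
    (p r : ℝ≥0∞) (hp : 1 ≤ p) (hr : 1 ≤ r)
    (h : ∃ C : ℝ, 0 < C ∧ ∃ c : ℕ,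
      ∀ (F : Type) [Field F] [Fintype F], c < ringChar F →
        ∀ f : (Fin d → F) → ℂ,
          lpNorm r (convMeas (Hfin F d k) f) ≤ C * lpNorm p f) :
    ((1 / p).toReal, (1 / r).toReal) ∈
      convexHull ℝ {((0 : ℝ), (0 : ℝ)), (0, 1), (1, 1),
        ((d : ℝ) / (2 * d - k), ((d : ℝ) - k) / (2 * d - k))} := by
  obtain ⟨C, hC, c, hbound⟩ := h
  have bounds (q : ℕ) (hq : q.Prime) (hcq : c < q) := by
    have := Fact.mk hq
    simpa only [ZMod.card] using exponent_bounds_of_averaging_bound (F := ZMod q) (by omega)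
      (zero_lt_one.trans_le hp).ne' hr hC (hbound (ZMod q) (by rwa [ZMod.ringChar_zmod_n]))
  have hk : (0 : ℝ) < k := by exact_mod_cast (by omega : 0 < k)
  have hk2d : (k : ℝ) < 2 * d := by exact_mod_cast (by omega : k < 2 * d)
  exact mem_convexHull_of_exponents_nonpos hk hk2d ENNReal.toReal_nonneg (toReal_one_div_le_one hr)
    (nonpos_of_forall_prime_mul_log_le fun q hq hcq => (bounds q hq hcq).2)
    (nonpos_of_forall_prime_mul_log_le fun q hq hcq => (bounds q hq hcq).1)

open scoped ENNReal in
/-- For `2 ≤ k ≤ d−1` and `1 ≤ p, r ≤ ∞`, if some constant `C`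
makes the averaging inequality over `H_k` hold for all finite fields of sufficiently
large characteristic, then `(1/p, 1/r)` lies in the convex hull of
`(0,0), (0,1), (1,1)` and `(d/(2d−k), (d−k)/(2d−k))`. -/
theorem averaging_Hk_necessary (d k : ℕ) (hd : 3 ≤ d) (hk2 : 2 ≤ k) (hkd : k ≤ d - 1)
    (p r : ℝ≥0∞) (hp : 1 ≤ p) (hr : 1 ≤ r)
    (h : ∃ C : ℝ, 0 < C ∧ ∃ c : ℕ,
      ∀ (F : Type) [Field F] [Fintype F], c < ringChar F →
        ∀ f : (Fin d → F) → ℂ,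
          lpNorm r (convMeas (Hfin F d k) f) ≤ C * lpNorm p f) :
    ((1 / p).toReal, (1 / r).toReal) ∈
      convexHull ℝ {((0 : ℝ), (0 : ℝ)), (0, 1), (1, 1),
        ((d : ℝ) / (2 * d - k), ((d : ℝ) - k) / (2 * d - k))} :=
  averaging_Hk_necessary_general d k hk2 hkd p r hp hr h
end
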